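/- arXiv:2211.14978 — 6 statements merged into one kernel-verified Lean document; each statement's English description precedes it below -/
import Mathlib

section
/- Let σ > 0 with σ ≠ 1, α ≠ 0, and let B, Y, w, δ, P^k, Γ^K, h be positive reals, m ∈ (0,1), J* real. Define K = B^{σ-1}·Y·(δ·P^k/P^c)^{-σ}·(1−m)·(Γ^K)^{σ-1}, N = B^{σ-1}·Y·(w/P^c)^{-σ}·e^{α(σ-1)J*}·(e^{α(σ-1)m} − 1)/(α(σ−1)), and let P^c satisfy (P^c)^{1-σ} = B^{σ-1}·[ (1−m)·(δP^k/Γ^K)^{1-σ} + (w·e^{-αJ*})^{1-σ}·(e^{α(σ-1)m} − 1)/(α(σ−1)) ]. Set ω̄ = (1−m)^{1/σ} + ((e^{α(σ-1)m} − 1)/(α(σ−1)))^{1/σ}, ω^k = (1−m)^{1/σ}/ω̄, and B̃ = B·ω̄^{σ/(σ-1)}. Then Y = B̃·[ ω^k·(Γ^K·K)^{(σ-1)/σ} + (1−ω^k)·(e^{αJ*}·N)^{(σ-1)/σ} ]^{σ/(σ-1)}. -/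
/-!
Capital and labor are two CES factors measured in efficiency units: `ΓK * K` at price
`δ * Pk / ΓK`, and `exp (α * J*) * N` at price `w * exp (-α * J*)`, with weights `1 - m` and
`E = (exp (α (σ - 1) m) - 1) / (α (σ - 1))`, the integral of `exp (α (σ - 1) t)` over the labor
tasks `t ∈ [0, m]`. For a factor with weight `a` and price `p`, CES demand raised to the power
`(σ - 1) / σ` and multiplied by `a ^ (1 / σ)` is `a * p ^ (1 - σ)` times a factor common to all
inputs, so summing over the factors and using the price index collapses the aggregate to
`(Y / B) ^ ((σ - 1) / σ)`. Normalising the weights `a ^ (1 / σ)` by their sum `ωbar` moves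
`ωbar ^ (σ / (σ - 1))` into the productivity term.
-/

open Real Finset

namespace CES

variable {σ B Y P : ℝ}

lemma exp_mul_sub_one_div_nonneg (c : ℝ) {m : ℝ} (hm : 0 ≤ m) : 0 ≤ (exp (c * m) - 1) / c := by
  rcases lt_trichotomy c 0 with hc | rfl | hc
  · have := exp_le_one_iff.mpr (mul_nonpos_of_nonpos_of_nonneg hc.le hm)
    exact div_nonneg_of_nonpos (by linarith) hc.le
  · simp
  · have := one_le_exp_iff.mpr (mul_nonneg hc.le hm)
    exact div_nonneg (by linarith) hc.le

lemma weight_rpow_mul_demand_rpow (hσ0 : σ ≠ 0) (hB : 0 < B) (hY : 0 < Y) (hP : 0 < P)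
    {a p : ℝ} (ha : 0 ≤ a) (hp : 0 < p) :
    a ^ (1 / σ) * (B ^ (σ - 1) * Y * a * (p / P) ^ (-σ)) ^ ((σ - 1) / σ) =
      a * p ^ (1 - σ) * (B ^ (σ - 1) * Y * P ^ σ) ^ ((σ - 1) / σ) := by
  have hD : 0 < B ^ (σ - 1) * Y * P ^ σ := by positivity
  have hdemand :
      B ^ (σ - 1) * Y * a * (p / P) ^ (-σ) = B ^ (σ - 1) * Y * P ^ σ * p ^ (-σ) * a := by
    rw [div_rpow hp.le hP.le, rpow_neg hp.le, rpow_neg hP.le]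
    field_simp
  have hweight : a ^ (1 / σ) * a ^ ((σ - 1) / σ) = a := by
    have hexp : 1 / σ + (σ - 1) / σ = 1 := by field_simp; ring
    rw [← rpow_add' ha (by rw [hexp]; exact one_ne_zero), hexp, rpow_one]
  have hprice : (p ^ (-σ)) ^ ((σ - 1) / σ) = p ^ (1 - σ) := by
    rw [← rpow_mul hp.le]
    congr 1
    field_simp
    ring
  rw [hdemand, mul_rpow (by positivity) ha, mul_rpow hD.le (by positivity), hprice]
  linear_combination (p ^ (1 - σ) * (B ^ (σ - 1) * Y * P ^ σ) ^ ((σ - 1) / σ)) * hweight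

variable {ι : Type*} [Fintype ι]

theorem output_eq_ces_of_factor_demands (hσ0 : σ ≠ 0) (hσ1 : σ ≠ 1) (hB : 0 < B) (hY : 0 < Y)
    (hP : 0 < P) {a p X : ι → ℝ} (ha : ∀ i, 0 ≤ a i) (hp : ∀ i, 0 < p i)
    (hX : ∀ i, X i = B ^ (σ - 1) * Y * a i * (p i / P) ^ (-σ))
    (hPeq : P ^ (1 - σ) = B ^ (σ - 1) * ∑ i, a i * p i ^ (1 - σ)) :
    Y = B * (∑ i, a i ^ (1 / σ) * X i ^ ((σ - 1) / σ)) ^ (σ / (σ - 1)) := by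
  have hsum : ∑ i, a i ^ (1 / σ) * X i ^ ((σ - 1) / σ) = (Y / B) ^ ((σ - 1) / σ) :=
    calc _ = (∑ i, a i * p i ^ (1 - σ)) * (B ^ (σ - 1) * Y * P ^ σ) ^ ((σ - 1) / σ) := by
          rw [sum_mul]
          exact sum_congr rfl fun i _ => by
            rw [hX, weight_rpow_mul_demand_rpow hσ0 hB hY hP (ha i) (hp i)]
      _ = P ^ (1 - σ) / B ^ (σ - 1) * (B ^ (σ - 1) * Y * P ^ σ) ^ ((σ - 1) / σ) := by
          rw [hPeq, mul_div_cancel_left₀ _ (by positivity)]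
      _ = (Y / B) ^ ((σ - 1) / σ) := by
          rw [← exp_log hB, ← exp_log hY, ← exp_log hP]
          simp only [← exp_mul, ← exp_add, ← exp_sub]
          congr 1
          field_simp
          ring
  rw [hsum, ← inv_div (σ - 1) σ,
    rpow_rpow_inv (by positivity) (div_ne_zero (sub_ne_zero.mpr hσ1) hσ0), mul_div_cancel₀ _ hB.ne']

lemma mul_demand_eq_demand_div_efficiency {Γ q : ℝ} (hΓ : 0 < Γ) (hq : 0 < q) (hP : 0 < P)
    (c : ℝ) :
    Γ * (c * (q / P) ^ (-σ) * Γ ^ (σ - 1)) = c * (q / Γ / P) ^ (-σ) := by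
  have hprice : (q / Γ / P) ^ (-σ) = (q / P) ^ (-σ) * Γ ^ σ := by
    rw [div_right_comm, div_rpow (by positivity) hΓ.le, rpow_neg hΓ.le, div_inv_eq_mul]
  have hΓpow : Γ * Γ ^ (σ - 1) = Γ ^ σ := by
    rw [rpow_sub_one hΓ.ne', mul_div_cancel₀ _ hΓ.ne']
  rw [hprice, ← hΓpow]
  ring

lemma rpow_mul_weighted_mean_rpow {c₁ c₂ x₁ x₂ : ℝ} (hc : 0 < c₁ + c₂)
    (h : 0 ≤ c₁ * x₁ + c₂ * x₂) (t : ℝ) :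
    (c₁ + c₂) ^ t * (c₁ / (c₁ + c₂) * x₁ + (1 - c₁ / (c₁ + c₂)) * x₂) ^ t =
      (c₁ * x₁ + c₂ * x₂) ^ t := by
  have hmean : c₁ / (c₁ + c₂) * x₁ + (1 - c₁ / (c₁ + c₂)) * x₂ =
      (c₁ * x₁ + c₂ * x₂) / (c₁ + c₂) := by
    field_simp
    ring
  rw [hmean, ← mul_rpow hc.le (div_nonneg h hc.le), mul_div_cancel₀ _ hc.ne']

end CES

open CES

theorem aggregate_CES_production_function_general
    (σ α B Y w δ Pk ΓK : ℝ)
    (hσ : 0 < σ) (hσ1 : σ ≠ 1)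
    (hB : 0 < B) (hY : 0 < Y) (hw : 0 < w) (hδ : 0 < δ) (hPk : 0 < Pk)
    (hΓ : 0 < ΓK)
    (m Jstar : ℝ) (hm : m ∈ Set.Ioo (0:ℝ) 1)
    (K N Pc ωbar ωk Bt : ℝ) (hPc : 0 < Pc)
    (hK : K = B ^ (σ - 1) * Y * (δ * Pk / Pc) ^ (-σ) * (1 - m) * ΓK ^ (σ - 1))
    (hN : N = B ^ (σ - 1) * Y * (w / Pc) ^ (-σ) * Real.exp (α * (σ - 1) * Jstar) *
      ((Real.exp (α * (σ - 1) * m) - 1) / (α * (σ - 1))))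
    (hPceq : Pc ^ (1 - σ) = B ^ (σ - 1) *
      ((1 - m) * (δ * Pk / ΓK) ^ (1 - σ) +
        (w * Real.exp (-α * Jstar)) ^ (1 - σ) *
          ((Real.exp (α * (σ - 1) * m) - 1) / (α * (σ - 1)))))
    (hωbar : ωbar = (1 - m) ^ (1/σ) +
      ((Real.exp (α * (σ - 1) * m) - 1) / (α * (σ - 1))) ^ (1/σ))
    (hωk : ωk = (1 - m) ^ (1/σ) / ωbar)
    (hBt : Bt = B * ωbar ^ (σ / (σ - 1))) :
    Y = Bt * (ωk * (ΓK * K) ^ ((σ - 1) / σ) +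
      (1 - ωk) * (Real.exp (α * Jstar) * N) ^ ((σ - 1) / σ)) ^ (σ / (σ - 1)) := by
  obtain ⟨hm0, hm1⟩ := hm
  set E := (exp (α * (σ - 1) * m) - 1) / (α * (σ - 1))
  have hE : 0 ≤ E := exp_mul_sub_one_div_nonneg _ hm0.le
  have h1m : 0 ≤ 1 - m := sub_nonneg.2 hm1.le
  have hcapital : ΓK * K = B ^ (σ - 1) * Y * (1 - m) * (δ * Pk / ΓK / Pc) ^ (-σ) := by
    rw [← mul_demand_eq_demand_div_efficiency hΓ (by positivity) hPc, hK]
    ring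
  have hlabor : exp (α * Jstar) * N =
      B ^ (σ - 1) * Y * E * (w * exp (-α * Jstar) / Pc) ^ (-σ) := by
    rw [neg_mul, exp_neg, ← div_eq_mul_inv,
      ← mul_demand_eq_demand_div_efficiency (exp_pos _) hw hPc, hN, ← exp_mul, mul_right_comm α]
    ring
  have hces := output_eq_ces_of_factor_demands (ι := Fin 2) hσ.ne' hσ1 hB hY hPc
    (a := ![1 - m, E]) (p := ![δ * Pk / ΓK, w * exp (-α * Jstar)])
    (X := ![ΓK * K, exp (α * Jstar) * N])
    (by simp [Fin.forall_fin_two, hE, h1m]) (by intro i; fin_cases i <;> simp <;> positivity)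
    (by simp [Fin.forall_fin_two, hcapital, hlabor])
    (by simp only [Fin.sum_univ_two, Matrix.cons_val_zero, Matrix.cons_val_one]; rw [hPceq]; ring)
  simp only [Fin.sum_univ_two, Matrix.cons_val_zero, Matrix.cons_val_one] at hces
  have hK0 : 0 ≤ ΓK * K :=
    hcapital ▸ mul_nonneg (mul_nonneg (by positivity) h1m) (by positivity)
  have hN0 : 0 ≤ exp (α * Jstar) * N :=
    hlabor ▸ mul_nonneg (mul_nonneg (by positivity) hE) (by positivity)
  rw [hBt, hωk, hωbar, mul_assoc, rpow_mul_weighted_mean_rpow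
    (add_pos_of_pos_of_nonneg (rpow_pos_of_pos (sub_pos.2 hm1) _) (rpow_nonneg hE _))
    (by positivity)]
  exact hces

/-- The aggregate CES production function of the task-based model (paper equation (7)). -/
theorem aggregate_CES_production_function
    (σ α B Y w δ Pk ΓK h : ℝ)
    (hσ : 0 < σ) (hσ1 : σ ≠ 1) (hα : α ≠ 0)
    (hB : 0 < B) (hY : 0 < Y) (hw : 0 < w) (hδ : 0 < δ) (hPk : 0 < Pk)
    (hΓ : 0 < ΓK) (hh : 0 < h)
    (m Jstar : ℝ) (hm : m ∈ Set.Ioo (0:ℝ) 1)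
    (K N Pc ωbar ωk Bt : ℝ) (hPc : 0 < Pc)
    (hK : K = B ^ (σ - 1) * Y * (δ * Pk / Pc) ^ (-σ) * (1 - m) * ΓK ^ (σ - 1))
    (hN : N = B ^ (σ - 1) * Y * (w / Pc) ^ (-σ) * Real.exp (α * (σ - 1) * Jstar) *
      ((Real.exp (α * (σ - 1) * m) - 1) / (α * (σ - 1))))
    (hPceq : Pc ^ (1 - σ) = B ^ (σ - 1) *
      ((1 - m) * (δ * Pk / ΓK) ^ (1 - σ) +
        (w * Real.exp (-α * Jstar)) ^ (1 - σ) *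
          ((Real.exp (α * (σ - 1) * m) - 1) / (α * (σ - 1)))))
    (hωbar : ωbar = (1 - m) ^ (1/σ) +
      ((Real.exp (α * (σ - 1) * m) - 1) / (α * (σ - 1))) ^ (1/σ))
    (hωk : ωk = (1 - m) ^ (1/σ) / ωbar)
    (hBt : Bt = B * ωbar ^ (σ / (σ - 1))) :
    Y = Bt * (ωk * (ΓK * K) ^ ((σ - 1) / σ) +
      (1 - ωk) * (Real.exp (α * Jstar) * N) ^ ((σ - 1) / σ)) ^ (σ / (σ - 1)) :=
  aggregate_CES_production_function_general σ α B Y w δ Pk ΓK hσ hσ1 hB hY hw hδ hPk hΓ m Jstar hm K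
    N Pc ωbar ωk Bt hPc hK hN hPceq hωbar hωk hBt
end

section
/- Let σ > 0 with σ ≠ 1, α ≠ 0, C > 0, and let J*₀ ≤ J*₁ and m₀, m₁ > 0 be reals with M₀ = J*₀ + m₀ and M₁ = J*₁ + m₁. Define l(j) = C·e^{α(σ-1)j} and L = ∫_{J*₀}^{M₀} l(j) dj. Then ∫_{J*₀}^{J*₁} l(j) dj − ∫_{M₀}^{M₁} l(j) dj = L·( 1 − e^{α(σ-1)(J*₁ − J*₀)}·(e^{α(σ-1)m₁} − 1)/(e^{α(σ-1)m₀} − 1) ). -/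
lemma int_exp_mul (k a b : ℝ) (hk : k ≠ 0) :
    ∫ x in a..b, Real.exp (k * x) = (Real.exp (k * b) - Real.exp (k * a)) / k := by
  have h : ∀ x, Real.exp (k * x) = Real.exp (x * k) := by intro x; rw [mul_comm]
  simp only [h]
  rw [intervalIntegral.integral_comp_mul_right Real.exp hk, integral_exp]
  rw [smul_eq_mul, mul_comm a k, mul_comm b k]
  field_simp

/-- Technological unemployment: the displacement effect minus the reinstatement effect
equals L·(1 − e^{α(σ-1)(J*₁−J*₀)}·(e^{α(σ-1)m₁}−1)/(e^{α(σ-1)m₀}−1)) (paper equation (17)). -/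
theorem technological_unemployment
    (σ α C : ℝ) (hσ : 0 < σ) (hσ1 : σ ≠ 1) (hα : α ≠ 0) (hC : 0 < C)
    (J0 J1 m0 m1 M0 M1 : ℝ) (hJ : J0 ≤ J1) (hm0 : 0 < m0) (hm1 : 0 < m1)
    (hM0 : M0 = J0 + m0) (hM1 : M1 = J1 + m1)
    (l : ℝ → ℝ) (hl : ∀ j, l j = C * Real.exp (α * (σ - 1) * j))
    (L : ℝ) (hL : L = ∫ j in J0..M0, l j) :
    (∫ j in J0..J1, l j) - (∫ j in M0..M1, l j) =
      L * (1 - Real.exp (α * (σ - 1) * (J1 - J0)) *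
        ((Real.exp (α * (σ - 1) * m1) - 1) / (Real.exp (α * (σ - 1) * m0) - 1))) := by
  set k := α * (σ - 1) with hkdef
  have hk : k ≠ 0 := mul_ne_zero hα (sub_ne_zero.mpr hσ1)
  have hint : ∀ a b : ℝ, ∫ j in a..b, l j = C * ((Real.exp (k * b) - Real.exp (k * a)) / k) := by
    intro a b
    simp only [hl]
    rw [intervalIntegral.integral_const_mul, int_exp_mul k a b hk]
  have hne : Real.exp (k * m0) - 1 ≠ 0 := by
    have : k * m0 ≠ 0 := mul_ne_zero hk hm0.ne'
    simpa [sub_eq_zero, Real.exp_eq_one_iff] using this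
  rw [hint, hint, hL, hint, hM0, hM1]
  have e1 : Real.exp (k * (J0 + m0)) = Real.exp (k * J0) * Real.exp (k * m0) := by
    rw [mul_add, Real.exp_add]
  have e2 : Real.exp (k * (J1 + m1)) = Real.exp (k * J1) * Real.exp (k * m1) := by
    rw [mul_add, Real.exp_add]
  have e3 : Real.exp (k * (J1 - J0)) * Real.exp (k * J0) = Real.exp (k * J1) := by
    rw [← Real.exp_add]; ring_nf
  rw [e1, e2, ← e3]
  field_simp
  ring
end

section
/- Let σ ∈ (0,1) and α > 0. Define G(m) = 1 − m + (1 − e^{−α(1−σ)m})/(α(1−σ)) for m ∈ [0,1]. Then G is continuous and strictly decreasing on [0,1] with G(0) = 1 and G(1) ∈ (0,1), and for every c > 1 with c^{σ−1} > G(1) there exists a unique m̄(c) ∈ (0,1) satisfying c^{1−σ}·[ 1 − m̄(c) + (e^{α(σ−1)·m̄(c)} − 1)/(α(σ−1)) ] = 1. Moreover, m̄ is strictly increasing: if 1 < c₁ < c₂ and both satisfy the above range condition, then m̄(c₁) < m̄(c₂). -/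
/-!
With `k = α (1 - σ) > 0` the bracket in the boundary equation is `G m = 1 - m + (1 - e^{-k m}) / k`,
whose derivative `e^{-k m} - 1` is negative for `m > 0`. So `G` falls strictly from `G 0 = 1` to
`G 1 = (1 - e^{-k}) / k > 0`, and the equation `c^{1-σ} G m = 1` reads `G m = c^{σ-1}`. For `c > 1`
the target `c^{σ-1}` lies in `(G 1, 1)`, so the intermediate value theorem and strict monotonicity
give a unique root; since `c ↦ c^{σ-1}` is decreasing, the root increases with `c`.
-/

open Real Set

noncomputable def costIndex (k m : ℝ) : ℝ := 1 - m + (1 - exp (-(k * m))) / k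

lemma costIndex_neg (a m : ℝ) : costIndex (-a) m = 1 - m + (exp (a * m) - 1) / a := by
  rw [costIndex, neg_mul, neg_neg, div_neg, ← neg_div, neg_sub]

@[simp] lemma costIndex_zero (k : ℝ) : costIndex k 0 = 1 := by simp [costIndex]

lemma continuous_costIndex (k : ℝ) : Continuous (costIndex k) := by
  unfold costIndex; fun_prop

lemma hasDerivAt_costIndex {k : ℝ} (hk : k ≠ 0) (m : ℝ) :
    HasDerivAt (costIndex k) (exp (-(k * m)) - 1) m := by
  have hexp : HasDerivAt (fun x => exp (-(k * x))) (exp (-(k * m)) * -(k * 1)) m :=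
    (((hasDerivAt_id m).const_mul k).neg).exp
  refine (((hasDerivAt_id m).const_sub 1).add ((hexp.const_sub 1).div_const k)).congr_deriv ?_
  field_simp
  ring

lemma strictAntiOn_costIndex {k : ℝ} (hk : 0 < k) : StrictAntiOn (costIndex k) (Ici 0) := by
  refine strictAntiOn_of_deriv_neg (convex_Ici 0) (continuous_costIndex k).continuousOn
    fun m hm => ?_
  rw [interior_Ici] at hm
  rw [(hasDerivAt_costIndex hk.ne' m).deriv, sub_neg, exp_lt_one_iff, neg_lt_zero]
  exact mul_pos hk hm

lemma costIndex_one_pos {k : ℝ} (hk : 0 < k) : 0 < costIndex k 1 := by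
  have : exp (-(k * 1)) < 1 := by rw [exp_lt_one_iff]; linarith
  simpa [costIndex] using div_pos (sub_pos.2 this) hk

lemma rpow_mul_eq_one_iff {c : ℝ} (hc : 0 < c) (t x : ℝ) : c ^ t * x = 1 ↔ x = c ^ (-t) := by
  rw [rpow_neg hc.le, mul_comm, mul_eq_one_iff_eq_inv₀ (rpow_pos_of_pos hc t).ne']

lemma StrictAntiOn.existsUnique_mem_Ioo_eq {f : ℝ → ℝ} {a b y : ℝ} (hab : a ≤ b)
    (hcont : ContinuousOn f (Icc a b)) (hf : StrictAntiOn f (Icc a b)) (hy : y ∈ Ioo (f b) (f a)) :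
    ∃! x, x ∈ Ioo a b ∧ f x = y := by
  obtain ⟨x, hx, rfl⟩ := intermediate_value_Ioo' hab hcont hy
  exact ⟨x, ⟨hx, rfl⟩, fun x' ⟨hx', hfx'⟩ =>
    hf.injOn (Ioo_subset_Icc_self hx') (Ioo_subset_Icc_self hx) hfx'⟩

/-- Lemma 1 of the paper: the boundary automation measure m̄(c) ∈ (0,1) exists, is
unique, and is strictly increasing in the effective cost of capital c. -/
theorem boundary_automation_measure
    (σ α : ℝ) (hσ : σ ∈ Set.Ioo (0:ℝ) 1) (hα : 0 < α)
    (G : ℝ → ℝ)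
    (hG : ∀ m, G m = 1 - m + (1 - Real.exp (-α * (1 - σ) * m)) / (α * (1 - σ))) :
    ContinuousOn G (Set.Icc 0 1) ∧
    StrictAntiOn G (Set.Icc 0 1) ∧
    G 0 = 1 ∧
    G 1 ∈ Set.Ioo (0:ℝ) 1 ∧
    (∀ c : ℝ, 1 < c → G 1 < c ^ (σ - 1) →
      ∃! m : ℝ, m ∈ Set.Ioo (0:ℝ) 1 ∧
        c ^ (1 - σ) * (1 - m + (Real.exp (α * (σ - 1) * m) - 1) / (α * (σ - 1))) = 1) ∧
    (∀ c₁ c₂ m₁ m₂ : ℝ, 1 < c₁ → c₁ < c₂ →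
      G 1 < c₁ ^ (σ - 1) → G 1 < c₂ ^ (σ - 1) →
      m₁ ∈ Set.Ioo (0:ℝ) 1 → m₂ ∈ Set.Ioo (0:ℝ) 1 →
      c₁ ^ (1 - σ) * (1 - m₁ + (Real.exp (α * (σ - 1) * m₁) - 1) / (α * (σ - 1))) = 1 →
      c₂ ^ (1 - σ) * (1 - m₂ + (Real.exp (α * (σ - 1) * m₂) - 1) / (α * (σ - 1))) = 1 →
      m₁ < m₂) := by
  obtain ⟨hσ0, hσ1⟩ := hσ
  have hk : 0 < α * (1 - σ) := mul_pos hα (by linarith)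
  obtain rfl : G = costIndex (α * (1 - σ)) := funext fun m => by rw [hG, costIndex]; ring_nf
  have hanti := (strictAntiOn_costIndex hk).mono (Icc_subset_Ici_self : Icc (0 : ℝ) 1 ⊆ Ici 0)
  have hG1 : costIndex (α * (1 - σ)) 1 < 1 := by
    simpa using hanti (left_mem_Icc.2 zero_le_one) (right_mem_Icc.2 zero_le_one) zero_lt_one
  have hEq : ∀ c m, 0 < c → (c ^ (1 - σ) * (1 - m + (exp (α * (σ - 1) * m) - 1) / (α * (σ - 1)))
      = 1 ↔ costIndex (α * (1 - σ)) m = c ^ (σ - 1)) := fun c m hc => by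
    rw [← costIndex_neg, neg_mul_eq_mul_neg, neg_sub, rpow_mul_eq_one_iff hc, neg_sub]
  refine ⟨(continuous_costIndex _).continuousOn, hanti, costIndex_zero _,
    ⟨costIndex_one_pos hk, hG1⟩, fun c hc hrange => ?_, ?_⟩
  · rw [existsUnique_congr fun m => and_congr_right' (hEq c m (by linarith))]
    refine hanti.existsUnique_mem_Ioo_eq zero_le_one (continuous_costIndex _).continuousOn
      ⟨hrange, ?_⟩
    rw [costIndex_zero]
    exact rpow_lt_one_of_one_lt_of_neg hc (by linarith)
  · intro c₁ c₂ m₁ m₂ hc₁ hc₁₂ _ _ hm₁ hm₂ h₁ h₂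
    rw [hEq c₁ m₁ (by linarith)] at h₁
    rw [hEq c₂ m₂ (by linarith)] at h₂
    refine (hanti.lt_iff_gt (Ioo_subset_Icc_self hm₂) (Ioo_subset_Icc_self hm₁)).1 ?_
    rw [h₁, h₂]
    exact rpow_lt_rpow_of_neg (by linarith) hc₁₂ (by linarith)
end

section
/- Let g, μ, r, δ > 0, s, τ, ζ ≥ 0 and Ω ∈ (0,1) be reals, and suppose: (i) s·(r − τ − ζ) = g; (ii) g = [ s·(r − τ − ζ) + r/μ ]·(1 − e^{−g·T}) for some T > 0; and (iii) T = (1/g)·log(1 + g·(1−Ω)/δ). Then e^{g·T} = 1 + g·μ/r, and consequently r = δ·μ/(1 − Ω). -/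
/-!
The Cambridge equation turns the circuit-of-capital relation into
`g = (g + r/μ)(1 - e^{-gT})`, which can be solved for `e^{gT} = 1 + gμ/r`. The stationary
production time says `e^{gT} = 1 + g(1-Ω)/δ`; comparing the two values gives `r = δμ/(1-Ω)`.
-/

open Real

lemma exp_eq_one_add_div_of_eq_mul_one_sub_exp_neg {g c x : ℝ} (hc : c ≠ 0)
    (h : g = (g + c) * (1 - exp (-x))) : exp x = 1 + g / c := by
  have hc_mul : (g + c) * exp (-x) = c := by linear_combination h
  rw [exp_neg] at hc_mul
  field_simp at hc_mul
  field_simp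
  linear_combination -hc_mul

lemma exp_mul_eq_of_eq_inv_mul_log {g y T : ℝ} (hg : g ≠ 0) (hy : 0 < y)
    (hT : T = 1 / g * log y) : exp (g * T) = y := by
  rw [hT, ← mul_assoc, mul_one_div_cancel hg, one_mul, exp_log hy]

theorem steady_state_rate_of_profit_general
    (g μ r δ s τ ζ Ω T : ℝ)
    (hg : 0 < g) (hμ : 0 < μ) (hr : 0 < r) (hδ : 0 < δ)
    (hΩ : Ω ∈ Set.Ioo (0:ℝ) 1)
    (hcam : s * (r - τ - ζ) = g)
    (hcirc : g = (s * (r - τ - ζ) + r / μ) * (1 - Real.exp (-g * T)))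
    (htime : T = (1 / g) * Real.log (1 + g * (1 - Ω) / δ)) :
    Real.exp (g * T) = 1 + g * μ / r ∧ r = δ * μ / (1 - Ω) := by
  have hΩ1 : 0 < 1 - Ω := sub_pos.mpr hΩ.2
  have hcirc_exp : exp (g * T) = 1 + g * μ / r := by
    rw [hcam, neg_mul] at hcirc
    rw [exp_eq_one_add_div_of_eq_mul_one_sub_exp_neg (by positivity) hcirc, div_div_eq_mul_div]
  have htime_exp : exp (g * T) = 1 + g * (1 - Ω) / δ :=
    exp_mul_eq_of_eq_inv_mul_log hg.ne' (by positivity) htime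
  refine ⟨hcirc_exp, ?_⟩
  have hratio : g * (1 - Ω) / δ = g * μ / r := by linarith
  field_simp at hratio ⊢
  exact hratio

/-- Steady-state rate-of-profit formula (paper equation (33b)): from the Cambridge
equation, the circuit-of-capital relation and the stationary production time, it follows
that e^{gT} = 1 + gμ/r and hence r = δμ/(1−Ω). -/
theorem steady_state_rate_of_profit
    (g μ r δ s τ ζ Ω T : ℝ)
    (hg : 0 < g) (hμ : 0 < μ) (hr : 0 < r) (hδ : 0 < δ)
    (hs : 0 ≤ s) (hτ : 0 ≤ τ) (hζ : 0 ≤ ζ) (hΩ : Ω ∈ Set.Ioo (0:ℝ) 1)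
    (hT : 0 < T)
    (hcam : s * (r - τ - ζ) = g)
    (hcirc : g = (s * (r - τ - ζ) + r / μ) * (1 - Real.exp (-g * T)))
    (htime : T = (1 / g) * Real.log (1 + g * (1 - Ω) / δ)) :
    Real.exp (g * T) = 1 + g * μ / r ∧ r = δ * μ / (1 - Ω) :=
  steady_state_rate_of_profit_general g μ r δ s τ ζ Ω T hg hμ hr hδ hΩ hcam hcirc htime
end

section
/- Let π ∈ (0,1), z̄ > 0, υ > 1, δ, g > 0, σ > 0 with σ ≠ 1, m ∈ (0,1), and B, γ_k, Ŷ, K̂ > 0. Set Î = (δ + g)·K̂ and suppose Ŷ_K > 0 satisfies K̂/Ŷ = (1−m)·(B·γ_k)^{σ−1}·Ŷ_K^{−σ}. If X̂ satisfies the stationary recursion X̂ = π^{(1+υ)/(1−υ)}·( Î^{(υ−1)/υ} − (1−π)·(Î·e^{−z̄})^{(υ−1)/υ} )^{υ/(υ−1)} + (1−π)·e^{−z̄}·X̂, then X̂/Ŷ = (δ + g)·π^{(1+υ)/(1−υ)}·(1 − (1−π)·e^{−z̄(υ−1)/υ})^{υ/(υ−1)}·(1 − (1−π)·e^{−z̄})^{−1}·(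 Ŷ_K/(B·γ_k) )^{−σ}·(1−m)/(B·γ_k). -/
/-- Stationary investment-expenditure-to-output ratio (paper equation (33c)). -/
theorem stationary_investment_output_ratio
    (π zbar υ δ g σ m B γk Yhat Khat Ihat YK Xhat : ℝ)
    (hπ : π ∈ Set.Ioo (0:ℝ) 1) (hz : 0 < zbar) (hυ : 1 < υ) (hδ : 0 < δ) (hg : 0 < g)
    (hσ0 : 0 < σ) (hσ1 : σ ≠ 1) (hm : m ∈ Set.Ioo (0:ℝ) 1)
    (hB : 0 < B) (hγ : 0 < γk) (hY : 0 < Yhat) (hK : 0 < Khat)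
    (hI : Ihat = (δ + g) * Khat)
    (hYK : 0 < YK)
    (hKY : Khat / Yhat = (1 - m) * (B * γk) ^ (σ - 1) * YK ^ (-σ))
    (hX : Xhat = π ^ ((1 + υ) / (1 - υ)) *
        (Ihat ^ ((υ - 1) / υ) -
          (1 - π) * (Ihat * Real.exp (-zbar)) ^ ((υ - 1) / υ)) ^ (υ / (υ - 1)) +
      (1 - π) * Real.exp (-zbar) * Xhat) :
    Xhat / Yhat = (δ + g) * π ^ ((1 + υ) / (1 - υ)) *
        (1 - (1 - π) * Real.exp (-(zbar * (υ - 1)) / υ)) ^ (υ / (υ - 1)) *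
        (1 - (1 - π) * Real.exp (-zbar))⁻¹ *
        (YK / (B * γk)) ^ (-σ) * ((1 - m) / (B * γk)) := by
  obtain ⟨hπ0, hπ1⟩ := hπ
  obtain ⟨hm0, hm1⟩ := hm
  have hυ0 : (0:ℝ) < υ := by linarith
  have hυ1 : (0:ℝ) < υ - 1 := by linarith
  have hIpos : 0 < Ihat := by rw [hI]; positivity
  have hBγ : 0 < B * γk := by positivity
  have hE : Real.exp (-zbar) ^ ((υ - 1) / υ) = Real.exp (-(zbar * (υ - 1)) / υ) := by
    rw [← Real.exp_mul]; ring_nf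
  have h1 : (Ihat * Real.exp (-zbar)) ^ ((υ - 1) / υ)
      = Ihat ^ ((υ - 1) / υ) * Real.exp (-(zbar * (υ - 1)) / υ) := by
    rw [Real.mul_rpow hIpos.le (Real.exp_pos _).le, hE]
  have hc0 : 0 < 1 - (1 - π) * Real.exp (-(zbar * (υ - 1)) / υ) := by
    have h : Real.exp (-(zbar * (υ - 1)) / υ) < 1 := by
      rw [Real.exp_lt_one_iff]
      have : 0 < zbar * (υ - 1) / υ := by positivity
      rw [neg_div]; linarith
    nlinarith [Real.exp_pos (-(zbar * (υ - 1)) / υ)]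
  have hq0 : 0 < 1 - (1 - π) * Real.exp (-zbar) := by
    have h : Real.exp (-zbar) < 1 := by
      rw [Real.exp_lt_one_iff]; linarith
    nlinarith [Real.exp_pos (-zbar)]
  rw [h1] at hX
  have h2 : Ihat ^ ((υ - 1) / υ) -
      (1 - π) * (Ihat ^ ((υ - 1) / υ) * Real.exp (-(zbar * (υ - 1)) / υ))
      = Ihat ^ ((υ - 1) / υ) * (1 - (1 - π) * Real.exp (-(zbar * (υ - 1)) / υ)) := by
    ring
  rw [h2] at hX
  have h3 : (Ihat ^ ((υ - 1) / υ) * (1 - (1 - π) * Real.exp (-(zbar * (υ - 1)) / υ)))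
        ^ (υ / (υ - 1))
      = Ihat * (1 - (1 - π) * Real.exp (-(zbar * (υ - 1)) / υ)) ^ (υ / (υ - 1)) := by
    rw [Real.mul_rpow (Real.rpow_nonneg hIpos.le _) hc0.le, ← Real.rpow_mul hIpos.le]
    have : (υ - 1) / υ * (υ / (υ - 1)) = 1 := by field_simp
    rw [this, Real.rpow_one]
  rw [h3] at hX
  -- solve for Xhat
  have hXsolve : Xhat = π ^ ((1 + υ) / (1 - υ)) * Ihat *
      (1 - (1 - π) * Real.exp (-(zbar * (υ - 1)) / υ)) ^ (υ / (υ - 1)) /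
      (1 - (1 - π) * Real.exp (-zbar)) := by
    rw [eq_div_iff (ne_of_gt hq0)]
    linear_combination hX
  have hKhat : Khat = Yhat * ((1 - m) * (B * γk) ^ (σ - 1) * YK ^ (-σ)) := by
    rw [← hKY]; field_simp
  have hdiv : (YK / (B * γk)) ^ (-σ)
      = YK ^ (-σ) * ((B * γk) ^ (σ - 1) * (B * γk)) := by
    rw [Real.div_rpow hYK.le hBγ.le, div_eq_mul_inv, ← Real.rpow_neg hBγ.le, neg_neg]
    have : (B * γk) ^ σ = (B * γk) ^ (σ - 1) * (B * γk) ^ (1:ℝ) := by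
      rw [← Real.rpow_add hBγ]; ring_nf
    rw [this, Real.rpow_one]
  rw [hXsolve, hI, hKhat, hdiv]
  field_simp
end

section
/- Let σ ∈ (0,1), α > 0, and B, c > 0. On an open interval of m > 0 where B^{1−σ} − (1−m)·c^{1−σ} > 0, define ŵ(m) > 0 by ŵ(m)^{1−σ} = ( B^{1−σ} − (1−m)·c^{1−σ} ) / ∫₀^m e^{α(σ−1)u} du. Then ŵ is differentiable and (1−σ)·ŵ(m)^{−σ}·ŵ′(m) = ( c^{1−σ} − (ŵ(m)·e^{−αm})^{1−σ} ) / ∫₀^m e^{α(σ−1)u} du. In particular ŵ′(m) > 0 if and only if ŵ(m)·e^{−αm} < c, and ŵ′(m) < 0 if and only if ŵ(m)·e^{−αm} > c. -/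
/-!
Near `m` the defining relation solves to `ŵ = (N / I) ^ (1 / (1 - σ))`, with `N` affine in `m`
and `I m = ∫₀^m e^{α(σ-1)u} du` differentiable by the fundamental theorem of calculus.
Differentiating `ŵ ^ (1 - σ) = N / I` gives
`(1 - σ) ŵ^{-σ} ŵ' = (N' - (N / I) I') / I = (c^{1-σ} - ŵ^{1-σ} e^{α(σ-1)m}) / I`,
and `ŵ^{1-σ} e^{α(σ-1)m} = (ŵ e^{-αm})^{1-σ}`. As `I m > 0` and `x ↦ x ^ (1 - σ)` is strictly
increasing, `ŵ'` has the sign of `c - ŵ e^{-αm}`.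
-/

open Filter Topology Real

theorem hasDerivAt_of_rpow_eventuallyEq {w F : ℝ → ℝ} {r F' m : ℝ} (hr : r ≠ 0)
    (hw : ∀ᶠ x in 𝓝 m, 0 < w x ∧ w x ^ r = F x) (hF : HasDerivAt F F' m) :
    HasDerivAt w (F' / (r * w m ^ (r - 1))) m := by
  obtain ⟨hwm, hFm⟩ := hw.self_of_nhds
  have hw_eq : w =ᶠ[𝓝 m] fun x => F x ^ r⁻¹ :=
    hw.mono fun x hx => by simp only [← hx.2, rpow_rpow_inv hx.1.le hr]
  have hFpos : 0 < F m := hFm ▸ rpow_pos_of_pos hwm r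
  refine ((hF.rpow_const (Or.inl hFpos.ne')).congr_of_eventuallyEq hw_eq).congr_deriv ?_
  rw [← hFm, ← rpow_mul hwm.le, show r * (r⁻¹ - 1) = -(r - 1) by field_simp; ring,
    rpow_neg hwm.le]
  field_simp

theorem detrended_wage_derivative_general
    (σ α B c : ℝ) (hσ : σ ∈ Set.Ioo (0:ℝ) 1) (hc : 0 < c)
    (lo hi : ℝ) (hlo : 0 ≤ lo)
    (w : ℝ → ℝ)
    (hw : ∀ m ∈ Set.Ioo lo hi, 0 < w m ∧
      w m ^ (1 - σ) = (B ^ (1 - σ) - (1 - m) * c ^ (1 - σ)) /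
        (∫ u in (0:ℝ)..m, Real.exp (α * (σ - 1) * u))) :
    ∀ m ∈ Set.Ioo lo hi,
      DifferentiableAt ℝ w m ∧
      (1 - σ) * w m ^ (-σ) * deriv w m =
        (c ^ (1 - σ) - (w m * Real.exp (-α * m)) ^ (1 - σ)) /
          (∫ u in (0:ℝ)..m, Real.exp (α * (σ - 1) * u)) ∧
      (0 < deriv w m ↔ w m * Real.exp (-α * m) < c) ∧
      (deriv w m < 0 ↔ c < w m * Real.exp (-α * m)) := by
  intro m hm
  have hr : 0 < 1 - σ := sub_pos.2 hσ.2
  have hwm := (hw m hm).1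
  have hI : 0 < ∫ u in (0:ℝ)..m, exp (α * (σ - 1) * u) :=
    intervalIntegral.intervalIntegral_pos_of_pos_on
      (Continuous.intervalIntegrable (by fun_prop) _ _) (fun _ _ => exp_pos _) (hlo.trans_lt hm.1)
  have hI' : HasDerivAt (fun x => ∫ u in (0:ℝ)..x, exp (α * (σ - 1) * u))
      (exp (α * (σ - 1) * m)) m :=
    (Continuous.integral_hasStrictDerivAt (by fun_prop) 0 m).hasDerivAt
  have hN' : HasDerivAt (fun x => B ^ (1 - σ) - (1 - x) * c ^ (1 - σ)) (c ^ (1 - σ)) m := by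
    simpa using ((hasDerivAt_id m).const_sub 1).mul_const (c ^ (1 - σ)) |>.const_sub (B ^ (1 - σ))
  have hw' := hasDerivAt_of_rpow_eventuallyEq hr.ne'
    (eventually_of_mem (Ioo_mem_nhds hm.1 hm.2) hw) (hN'.div hI' hI.ne')
  have hscale : (w m * exp (-α * m)) ^ (1 - σ) = w m ^ (1 - σ) * exp (α * (σ - 1) * m) := by
    rw [mul_rpow hwm.le (exp_pos _).le, ← exp_mul]
    ring_nf
  have hq : 0 < (1 - σ) * w m ^ (-σ) := mul_pos hr (rpow_pos_of_pos hwm _)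
  have hderiv : deriv w m = (c ^ (1 - σ) - (w m * exp (-α * m)) ^ (1 - σ)) /
      (∫ u in (0:ℝ)..m, exp (α * (σ - 1) * u)) / ((1 - σ) * w m ^ (-σ)) := by
    rw [hw'.deriv, hscale, (hw m hm).2, show 1 - σ - 1 = -σ by ring]
    field_simp
  have hwe : 0 < w m * exp (-α * m) := mul_pos hwm (exp_pos _)
  refine ⟨hw'.differentiableAt, by rw [hderiv]; field_simp, ?_, ?_⟩
  · rw [hderiv, div_pos_iff_of_pos_right hq, div_pos_iff_of_pos_right hI, sub_pos,
      rpow_lt_rpow_iff hwe.le hc.le hr]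
  · rw [hderiv, div_lt_iff₀ hq, zero_mul, div_lt_iff₀ hI, zero_mul, sub_neg,
      rpow_lt_rpow_iff hc.le hwe.le hr]

/-- Key step of Proposition 1(i): the detrended stationary wage ŵ(m) implicitly defined
by the ideal cost-price-index condition is differentiable, its derivative satisfies
(1−σ)ŵ^{−σ}ŵ′ = (c^{1−σ} − (ŵe^{−αm})^{1−σ}) / ∫₀^m e^{α(σ−1)u} du, and ŵ′ > 0 iff
ŵe^{−αm} < c (region 1), ŵ′ < 0 iff ŵe^{−αm} > c. -/
theorem detrended_wage_derivative
    (σ α B c : ℝ) (hσ : σ ∈ Set.Ioo (0:ℝ) 1) (hα : 0 < α) (hB : 0 < B) (hc : 0 < c)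
    (lo hi : ℝ) (hlo : 0 ≤ lo) (hlohi : lo < hi)
    (hpos : ∀ m ∈ Set.Ioo lo hi, 0 < B ^ (1 - σ) - (1 - m) * c ^ (1 - σ))
    (w : ℝ → ℝ)
    (hw : ∀ m ∈ Set.Ioo lo hi, 0 < w m ∧
      w m ^ (1 - σ) = (B ^ (1 - σ) - (1 - m) * c ^ (1 - σ)) /
        (∫ u in (0:ℝ)..m, Real.exp (α * (σ - 1) * u))) :
    ∀ m ∈ Set.Ioo lo hi,
      DifferentiableAt ℝ w m ∧
      (1 - σ) * w m ^ (-σ) * deriv w m =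
        (c ^ (1 - σ) - (w m * Real.exp (-α * m)) ^ (1 - σ)) /
          (∫ u in (0:ℝ)..m, Real.exp (α * (σ - 1) * u)) ∧
      (0 < deriv w m ↔ w m * Real.exp (-α * m) < c) ∧
      (deriv w m < 0 ↔ c < w m * Real.exp (-α * m)) :=
  detrended_wage_derivative_general σ α B c hσ hc lo hi hlo w hw
end
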